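/- Let φ be a perfect IFG_N-formula over σ (every slash set occurring in φ is ∅) and 𝔄 a σ-structure with universe A. Then the meaning ‖φ‖_𝔄 is a perfect double suit: there is a team V ⊆ ^N A such that ‖φ‖_𝔄 = (𝒫(V), 𝒫(^N A \ V)). -/

import Mathlib

open FirstOrder

/-- A team: a set of valuations `Fin N → A`. -/
abbrev Team (A : Type*) (N : ℕ) := Set (Fin N → A)

/-- A pair of collections of teams. -/
abbrev TPair (A : Type*) (N : ℕ) := Set (Team A N) × Set (Team A N)

/-- A suit: a nonempty collection of teams closed under subsets. -/
def IsSuit {A : Type*} {N : ℕ} (S : Set (Team A N)) : Prop :=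
  S.Nonempty ∧ ∀ ⦃V V' : Team A N⦄, V ∈ S → V' ⊆ V → V' ∈ S

/-- A double suit: a pair of suits whose intersection is `{∅}`. -/
def IsDoubleSuit {A : Type*} {N : ℕ} (X : TPair A N) : Prop :=
  IsSuit X.1 ∧ IsSuit X.2 ∧ X.1 ∩ X.2 = {∅}

/-- The pair `(𝒫(V), 𝒫(^N A \ V))`. -/
def perfPair {A : Type*} {N : ℕ} (V : Team A N) : TPair A N :=
  (Set.powerset V, Set.powerset Vᶜ)

/-- `a ≈_J b` : the valuations `a` and `b` agree outside of `J`. -/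
def AgreeOutside {A : Type*} {N : ℕ} (J : Set (Fin N)) (a b : Fin N → A) : Prop :=
  ∀ i ∉ J, a i = b i

/-- `V = V₁ ∪_J V₂` : `V₁, V₂` form a `J`-saturated disjoint cover of `V`. -/
def CovJ {A : Type*} {N : ℕ} (J : Set (Fin N)) (V V₁ V₂ : Team A N) : Prop :=
  Disjoint V₁ V₂ ∧ V₁ ∪ V₂ = V ∧
  (∀ a ∈ V₁, ∀ b ∈ V, AgreeOutside J a b → b ∈ V₁) ∧
  (∀ a ∈ V₂, ∀ b ∈ V, AgreeOutside J a b → b ∈ V₂)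

/-- `f` is independent of `J` on `V`. -/
def IndepOn {A : Type*} {N : ℕ} (J : Set (Fin N)) (V : Team A N)
    (f : (Fin N → A) → A) : Prop :=
  ∀ a ∈ V, ∀ b ∈ V, AgreeOutside J a b → f a = f b

/-- The `n`-variation of `V` by `f`: `V(n:f) = {a(n:f(a)) : a ∈ V}`. -/
def varF {A : Type*} {N : ℕ} (V : Team A N) (n : Fin N) (f : (Fin N → A) → A) : Team A N :=
  (fun a => Function.update a n (f a)) '' V

/-- `V(n:A) = {a(n:b) : a ∈ V, b ∈ A}`. -/
def varAll {A : Type*} {N : ℕ} (V : Team A N) (n : Fin N) : Team A N :=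
  {c | ∃ a ∈ V, ∃ b : A, c = Function.update a n b}

/-- IFG_N-formulas over the signature `L`: atomic first-order formulas
(equalities and relations between terms in the variables `v_0, …, v_{N-1}`),
closed under `∼ψ`, `ψ₁ ∨_J ψ₂`, and `∃v_n/J ψ`. -/
inductive IFG (L : Language) (N : ℕ) : Type _
  | equal (t₁ t₂ : L.Term (Fin N)) : IFG L N
  | rel {k : ℕ} (R : L.Relations k) (ts : Fin k → L.Term (Fin N)) : IFG L N
  | not (φ : IFG L N) : IFG L N
  | or (J : Set (Fin N)) (φ₁ φ₂ : IFG L N) : IFG L N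
  | ex (n : Fin N) (J : Set (Fin N)) (φ : IFG L N) : IFG L N

/-- Hodges' trump semantics: `Sat A φ true V` means `𝔄 ⊨⁺ φ[V]` (`V` is a trump),
and `Sat A φ false W` means `𝔄 ⊨⁻ φ[W]` (`W` is a cotrump). -/
def Sat {L : Language} {N : ℕ} (A : Type*) [L.Structure A] :
    IFG L N → Bool → Team A N → Prop
  | .equal t₁ t₂, true, V => ∀ a ∈ V, t₁.realize a = t₂.realize a
  | .equal t₁ t₂, false, W => ∀ a ∈ W, t₁.realize a ≠ t₂.realize a
  | .rel R ts, true, V => ∀ a ∈ V, Language.Structure.RelMap R (fun i => (ts i).realize a)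
  | .rel R ts, false, W => ∀ a ∈ W, ¬ Language.Structure.RelMap R (fun i => (ts i).realize a)
  | .not φ, b, V => Sat A φ (!b) V
  | .or J φ₁ φ₂, true, V =>
      ∃ V₁ V₂, CovJ J V V₁ V₂ ∧ Sat A φ₁ true V₁ ∧ Sat A φ₂ true V₂
  | .or _ φ₁ φ₂, false, W => Sat A φ₁ false W ∧ Sat A φ₂ false W
  | .ex n J φ, true, V =>
      ∃ f : (Fin N → A) → A, IndepOn J V f ∧ Sat A φ true (varF V n f)
  | .ex n _ φ, false, W => Sat A φ false (varAll W n)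

/-- The meaning `‖φ‖_𝔄 = ({V : 𝔄 ⊨⁺ φ[V]}, {W : 𝔄 ⊨⁻ φ[W]})`. -/
def meaning {L : Language} {N : ℕ} (A : Type*) [L.Structure A] (φ : IFG L N) :
    TPair A N :=
  ({V | Sat A φ true V}, {W | Sat A φ false W})

/-- An IFG-formula is perfect if all of its slash sets are empty. -/
def IFG.Perfect {L : Language} {N : ℕ} : IFG L N → Prop
  | .equal _ _ => True
  | .rel _ _ => True
  | .not φ => φ.Perfect
  | .or J φ₁ φ₂ => J = ∅ ∧ φ₁.Perfect ∧ φ₂.Perfect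
  | .ex _ J φ => J = ∅ ∧ φ.Perfect

/-- The perfection `φ_∅` of `φ`: replace every slash set by `∅`. -/
def IFG.perfection {L : Language} {N : ℕ} : IFG L N → IFG L N
  | .equal t₁ t₂ => .equal t₁ t₂
  | .rel R ts => .rel R ts
  | .not φ => .not φ.perfection
  | .or _ φ₁ φ₂ => .or ∅ φ₁.perfection φ₂.perfection
  | .ex n _ φ => .ex n ∅ φ.perfection

/-! Perfect formulas are first-order: by induction on `φ`, the trumps of a perfect formula are
exactly the subsets of the team of valuations satisfying it in Tarski's sense, and its
cotrumps are the subsets of the complement. With empty slash sets, a split `∪_∅` is just a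
disjoint cover and a Skolem function `f : V → A` is unconstrained, so `∨_∅` and `∃v_n/∅`
compute union and cylindrification of these teams, while `∼` complements them. -/

namespace IFG

variable {L : Language} {N : ℕ} (A : Type*) [L.Structure A]

/-- Tarski satisfaction of the first-order formula underlying `φ`; slash sets are ignored. -/
def Realize : IFG L N → (Fin N → A) → Prop
  | .equal t₁ t₂, a => t₁.realize a = t₂.realize a
  | .rel R ts, a => Language.Structure.RelMap R (fun i => (ts i).realize a)
  | .not φ, a => ¬ φ.Realize a
  | .or _ φ₁ φ₂, a => φ₁.Realize a ∨ φ₂.Realize a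
  | .ex n _ φ, a => ∃ b, φ.Realize (Function.update a n b)

end IFG

theorem exists_disjoint_cover_subset_iff {α : Type*} {V U₁ U₂ : Set α} :
    (∃ V₁ V₂, (Disjoint V₁ V₂ ∧ V₁ ∪ V₂ = V) ∧ V₁ ⊆ U₁ ∧ V₂ ⊆ U₂) ↔ V ⊆ U₁ ∪ U₂ := by
  constructor
  · rintro ⟨V₁, V₂, ⟨-, rfl⟩, h₁, h₂⟩
    exact Set.union_subset_union h₁ h₂
  · intro hV
    refine ⟨V ∩ U₁, V ∩ U₁ᶜ, ⟨?_, Set.inter_union_compl V U₁⟩, Set.inter_subset_right, ?_⟩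
    · exact Set.disjoint_left.2 fun a h₁ h₂ => h₂.2 h₁.2
    · exact fun a ha => (hV ha.1).resolve_left ha.2

section Teams

variable {A : Type*} {N : ℕ}

theorem AgreeOutside.eq_of_empty {a b : Fin N → A} (h : AgreeOutside ∅ a b) : a = b :=
  funext fun i => h i (Set.notMem_empty i)

theorem covJ_empty_iff {V V₁ V₂ : Team A N} :
    CovJ ∅ V V₁ V₂ ↔ Disjoint V₁ V₂ ∧ V₁ ∪ V₂ = V := by
  refine ⟨fun h => ⟨h.1, h.2.1⟩, fun ⟨hd, hu⟩ => ⟨hd, hu, ?_, ?_⟩⟩ <;>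
  · intro a ha b _ hab
    rwa [← hab.eq_of_empty]

theorem indepOn_empty (V : Team A N) (f : (Fin N → A) → A) : IndepOn ∅ V f :=
  fun _ _ _ _ hab => congrArg f hab.eq_of_empty

def cylinder (U : Team A N) (n : Fin N) : Team A N :=
  {a | ∃ b, Function.update a n b ∈ U}

theorem exists_varF_subset_iff {V U : Team A N} {n : Fin N} :
    (∃ f, varF V n f ⊆ U) ↔ V ⊆ cylinder U n := by
  constructor
  · rintro ⟨f, hf⟩ a ha
    exact ⟨f a, hf ⟨a, ha, rfl⟩⟩
  · intro hV
    classical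
    refine ⟨fun a => if h : a ∈ cylinder U n then h.choose else a n, ?_⟩
    rintro _ ⟨a, ha, rfl⟩
    simpa only [dif_pos (hV ha)] using (hV ha).choose_spec

theorem varAll_subset_compl_iff {W U : Team A N} {n : Fin N} :
    varAll W n ⊆ Uᶜ ↔ W ⊆ (cylinder U n)ᶜ := by
  constructor
  · rintro h a ha ⟨b, hb⟩
    exact h ⟨a, ha, b, rfl⟩ hb
  · rintro h _ ⟨a, ha, b, rfl⟩ hb
    exact h ha ⟨b, hb⟩

end Teams

section Meaning

variable {L : Language} {N : ℕ} {A : Type*} [L.Structure A]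

theorem meaning_eq_perfPair_iff {φ : IFG L N} {U : Team A N} :
    meaning A φ = perfPair U ↔
      (∀ V, Sat A φ true V ↔ V ⊆ U) ∧ ∀ W, Sat A φ false W ↔ W ⊆ Uᶜ := by
  simp only [meaning, perfPair, Prod.ext_iff, Set.ext_iff, Set.mem_ofPred_eq,
    Set.mem_powerset_iff]

theorem meaning_not (φ : IFG L N) : meaning A (.not φ) = (meaning A φ).swap :=
  rfl

theorem perfPair_swap (U : Team A N) : (perfPair U).swap = perfPair Uᶜ := by
  rw [perfPair, perfPair, compl_compl]
  rfl

theorem meaning_or_empty {φ₁ φ₂ : IFG L N} {U₁ U₂ : Team A N}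
    (h₁ : meaning A φ₁ = perfPair U₁) (h₂ : meaning A φ₂ = perfPair U₂) :
    meaning A (.or ∅ φ₁ φ₂) = perfPair (U₁ ∪ U₂) := by
  rw [meaning_eq_perfPair_iff] at h₁ h₂ ⊢
  refine ⟨fun V => ?_, fun W => ?_⟩
  · simp only [Sat, covJ_empty_iff, h₁.1, h₂.1]
    exact exists_disjoint_cover_subset_iff
  · simp only [Sat, h₁.2, h₂.2, Set.compl_union, Set.subset_inter_iff]

theorem meaning_ex_empty {φ : IFG L N} {U : Team A N} (n : Fin N)
    (h : meaning A φ = perfPair U) :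
    meaning A (.ex n ∅ φ) = perfPair (cylinder U n) := by
  rw [meaning_eq_perfPair_iff] at h ⊢
  refine ⟨fun V => ?_, fun W => ?_⟩
  · simp only [Sat, h.1, indepOn_empty, true_and]
    exact exists_varF_subset_iff
  · simp only [Sat, h.2]
    exact varAll_subset_compl_iff

theorem IFG.Perfect.meaning_eq_perfPair_realize {φ : IFG L N} (hφ : φ.Perfect) :
    meaning A φ = perfPair {a | φ.Realize A a} := by
  induction φ with
  | equal t₁ t₂ => rfl
  | rel R ts => rfl
  | not φ ih =>
    rw [meaning_not, ih hφ, perfPair_swap]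
    rfl
  | or J φ₁ φ₂ ih₁ ih₂ =>
    obtain ⟨rfl, hφ₁, hφ₂⟩ := hφ
    exact meaning_or_empty (ih₁ hφ₁) (ih₂ hφ₂)
  | ex n J φ ih =>
    obtain ⟨rfl, hφ⟩ := hφ
    exact meaning_ex_empty n (ih hφ)

end Meaning

/-- The meaning of a perfect IFG-formula is a perfect double suit:
`‖φ‖_𝔄 = (𝒫(V), 𝒫(^N A \ V))` for some team `V`. -/
theorem perfect_formula_perfect_meaning {L : Language} {N : ℕ} (A : Type*)
    [L.Structure A] (φ : IFG L N) (hφ : φ.Perfect) :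
    ∃ V : Team A N, meaning A φ = perfPair V :=
  ⟨_, hφ.meaning_eq_perfPair_realize⟩
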